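/- arXiv:math/0406144 — 3 statements merged into one kernel-verified Lean document; each statement's English description precedes it below -/
import Mathlib

section
/- Let (𝒢, ∇, f) be a strongly G-equivariant bundle gerbe with G-invariant connection and curving over M, with 3-curvature Ω (the unique 3-form on M with π*Ω = df). Fix λ : Y → Hom(𝔤, iℝ) with δλ = λ̃, and define E ∈ A¹(M, 𝔤*) and ζ : G → A⁰(M, 𝔤*) by 2πi⟨X, π*E⟩ = ⟨X, dλ⟩ + ι_{X*} f and 2πi⟨X, π*ζ(g)⟩ = ⟨X, g*λ − Ad_g λ⟩. Then: (i) −(1/2πi) ι_{X*}Ω = ⟨X, dE⟩ for all X ∈ 𝔤; (ii) g*E − Ad_g E = dζ(g) for all g ∈ G; (iii) Ad_g ζ(h) − ζ(gh) + h*ζ(g) = 0 for all g, h ∈ G. In particular (E, ζ) ∈ 𝒵. -/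
/-!
STATEMENT 7. For a strongly G-equivariant bundle gerbe (𝒢, ∇, f) over M with 3-curvature
Ω (π*Ω = df), a choice λ : Y → Hom(𝔤, iℝ) with δλ = λ̃, and E, ζ defined by
2πi⟨X, π*E⟩ = ⟨X, dλ⟩ + ι_{X*}f and 2πi⟨X, π*ζ(g)⟩ = ⟨X, g*λ − Ad_g λ⟩, one has:
(i) −(1/2πi) ι_{X*}Ω = ⟨X, dE⟩;  (ii) g*E − Ad_g E = dζ(g);
(iii) Ad_g ζ(h) − ζ(gh) + h*ζ(g) = 0.  In particular (E, ζ) ∈ 𝒵.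

Encoding: the complexified de Rham complexes of M, Y and W = Y^[2] are abstract ℂ-modules
`Mi`, `Yi`, `Wi` with differentials d, injective pullback π* (π : Y → M is a surjective
submersion, G-equivariant), pullbacks p₁*, p₂* along the two projections W → Y,
contractions ι by fundamental vector fields, and contravariant pullback actions a of G,
with their standard compatibilities.  Hom(𝔤, iℝ)-valued forms are given componentwise in
X ∈ 𝔤; (Ad_g E)(X) = E(Ad_{g⁻¹}X).  The gerbe data enter through: δλ = λ̃; δf = F(∇);
the moment identities dλ̃(X) + ι_{X*}F(∇) = 0, g*λ̃ = Ad_g λ̃ of (P, ∇); G-invariance of f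
and its Cartan identity L_{X*}f = 0; π*Ω = df.
-/

theorem stmt7
    {G : Type*} [Group G]
    {𝔤 : Type*} [LieRing 𝔤] [LieAlgebra ℝ 𝔤]
    (Ad : G → 𝔤 → 𝔤)
    (hAdmul : ∀ a b : G, Ad (a * b) = Ad a ∘ Ad b) (hAdone : Ad 1 = id)
    {M0 M1 M2 M3 Y0 Y1 Y2 Y3 W0 W1 W2 : Type*}
    [AddCommGroup M0] [Module ℂ M0] [AddCommGroup M1] [Module ℂ M1]
    [AddCommGroup M2] [Module ℂ M2] [AddCommGroup M3] [Module ℂ M3]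
    [AddCommGroup Y0] [Module ℂ Y0] [AddCommGroup Y1] [Module ℂ Y1]
    [AddCommGroup Y2] [Module ℂ Y2] [AddCommGroup Y3] [Module ℂ Y3]
    [AddCommGroup W0] [Module ℂ W0] [AddCommGroup W1] [Module ℂ W1]
    [AddCommGroup W2] [Module ℂ W2]
    -- differentials
    (dM0 : M0 →ₗ[ℂ] M1) (dM1 : M1 →ₗ[ℂ] M2) (dM2 : M2 →ₗ[ℂ] M3)
    (dY0 : Y0 →ₗ[ℂ] Y1) (dY1 : Y1 →ₗ[ℂ] Y2) (dY2 : Y2 →ₗ[ℂ] Y3)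
    (dW0 : W0 →ₗ[ℂ] W1)
    (hdd : ∀ ω : Y0, dY1 (dY0 ω) = 0)
    -- pullback along π : Y → M
    (πs0 : M0 →ₗ[ℂ] Y0) (πs1 : M1 →ₗ[ℂ] Y1) (πs2 : M2 →ₗ[ℂ] Y2) (πs3 : M3 →ₗ[ℂ] Y3)
    (hπinj0 : Function.Injective πs0) (hπinj1 : Function.Injective πs1)
    (hπinj2 : Function.Injective πs2)
    (hπd0 : ∀ ω, πs1 (dM0 ω) = dY0 (πs0 ω)) (hπd1 : ∀ ω, πs2 (dM1 ω) = dY1 (πs1 ω))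
    (hπd2 : ∀ ω, πs3 (dM2 ω) = dY2 (πs2 ω))
    -- the two projections W = Y^[2] → Y
    (p10 p20 : Y0 →ₗ[ℂ] W0) (p12 p22 : Y2 →ₗ[ℂ] W2)
    -- contractions by fundamental vector fields
    (ιM1 : 𝔤 → M1 →ₗ[ℂ] M0) (ιM2 : 𝔤 → M2 →ₗ[ℂ] M1) (ιM3 : 𝔤 → M3 →ₗ[ℂ] M2)
    (ιY2 : 𝔤 → Y2 →ₗ[ℂ] Y1) (ιY3 : 𝔤 → Y3 →ₗ[ℂ] Y2)
    (ιW2 : 𝔤 → W2 →ₗ[ℂ] W1)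
    (hπι2 : ∀ X ω, ιY2 X (πs2 ω) = πs1 (ιM2 X ω))
    (hπι3 : ∀ X ω, ιY3 X (πs3 ω) = πs2 (ιM3 X ω))
    -- contravariant pullback actions of G
    (aM0 : G → M0 →ₗ[ℂ] M0) (aM1 : G → M1 →ₗ[ℂ] M1)
    (aY0 : G → Y0 →ₗ[ℂ] Y0) (aY1 : G → Y1 →ₗ[ℂ] Y1) (aY2 : G → Y2 →ₗ[ℂ] Y2)
    (aW0 : G → W0 →ₗ[ℂ] W0)
    (haY0mul : ∀ (g h : G) (ω : Y0), aY0 (g * h) ω = aY0 h (aY0 g ω))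
    (haπ0 : ∀ (g : G) (ω : M0), aY0 g (πs0 ω) = πs0 (aM0 g ω))
    (haπ1 : ∀ (g : G) (ω : M1), aY1 g (πs1 ω) = πs1 (aM1 g ω))
    (had : ∀ (g : G) (ω : Y0), aY1 g (dY0 ω) = dY0 (aY0 g ω))
    (haι : ∀ (g : G) (X : 𝔤) (ω : Y2), aY1 g (ιY2 X ω) = ιY2 (Ad g⁻¹ X) (aY2 g ω))
    -- the gerbe data: λ, λ̃, curving f, curvature F(∇), 3-curvature Ω, and E, ζ
    (lam : 𝔤 → Y0) (lamT : 𝔤 → W0) (f : Y2) (Fnab : W2) (Ωc : M3)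
    (E : 𝔤 → M1) (ζ : G → 𝔤 → M0)
    (hdlam : ∀ X, p10 (lam X) - p20 (lam X) = lamT X)          -- δλ = λ̃
    (hδf : p12 f - p22 f = Fnab)                              -- δf = F(∇)
    (hmom1 : ∀ X, dW0 (lamT X) + ιW2 X Fnab = 0)              -- moment identity
    (hmom2 : ∀ (g : G) (X : 𝔤), aW0 g (lamT X) = lamT (Ad g⁻¹ X))  -- g*λ̃ = Ad_g λ̃
    (hΩ : πs3 Ωc = dY2 f)                                     -- π*Ω = df
    (hfinv : ∀ g : G, aY2 g f = f)                            -- f is G-invariant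
    (hLf : ∀ X : 𝔤, ιY3 X (dY2 f) + dY1 (ιY2 X f) = 0)        -- L_{X*}f = 0
    (defE : ∀ X : 𝔤,
      (2 * (Real.pi : ℂ) * Complex.I) • πs1 (E X) = dY0 (lam X) + ιY2 X f)
    (defζ : ∀ (g : G) (X : 𝔤),
      (2 * (Real.pi : ℂ) * Complex.I) • πs0 (ζ g X) = aY0 g (lam X) - lam (Ad g⁻¹ X)) :
    -- (i) −(1/2πi) ι_{X*}Ω = ⟨X, dE⟩
    (∀ X : 𝔤, -((2 * (Real.pi : ℂ) * Complex.I)⁻¹) • ιM3 X Ωc = dM1 (E X)) ∧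
    -- (ii) g*E − Ad_g E = dζ(g)
    (∀ (g : G) (X : 𝔤), aM1 g (E X) - E (Ad g⁻¹ X) = dM0 (ζ g X)) ∧
    -- (iii) Ad_g ζ(h) − ζ(gh) + h*ζ(g) = 0
    (∀ (g h : G) (X : 𝔤), ζ h (Ad g⁻¹ X) - ζ (g * h) X + aM0 h (ζ g X) = 0) := by
  set c : ℂ := 2 * (Real.pi : ℂ) * Complex.I with hc
  have hcne : c ≠ 0 := by
    simp [hc, Real.pi_ne_zero, Complex.I_ne_zero, Complex.ofReal_ne_zero]
  refine ⟨?_, ?_, ?_⟩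
  · intro X
    apply smul_right_injective M2 hcne
    apply hπinj2
    have hR : πs2 (c • dM1 (E X)) = - πs2 (ιM3 X Ωc) := by
      have h2 : dY1 (ιY2 X f) = - ιY3 X (dY2 f) :=
        by rw [eq_neg_iff_add_eq_zero, add_comm]; exact hLf X
      rw [map_smul, hπd1, ← map_smul, defE, map_add, hdd, zero_add, h2, ← hΩ,
        hπι3]
    rw [hR, map_smul, map_smul, smul_smul,
      show c * -c⁻¹ = -1 by field_simp, neg_one_smul]
  · intro g X
    apply smul_right_injective M1 hcne
    apply hπinj1
    have hL : πs1 (c • (aM1 g (E X) - E (Ad g⁻¹ X)))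
        = dY0 (aY0 g (lam X) - lam (Ad g⁻¹ X)) := by
      rw [map_smul, map_sub, smul_sub, ← haπ1, ← (aY1 g).map_smul, defE, defE,
        map_add, had, haι, hfinv, map_sub]
      abel
    rw [hL, ← defζ, map_smul, map_smul, hπd0]
  · intro g h X
    apply smul_right_injective M0 hcne
    apply hπinj0
    rw [map_smul, map_smul, map_zero, smul_zero]
    rw [map_add, map_sub, smul_add, smul_sub, ← haπ0, ← (aY0 h).map_smul]
    simp only [defζ]
    rw [map_sub, haY0mul, mul_inv_rev, hAdmul]
    simp only [Function.comp_apply]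
    abel
end

section
/- With the notation of the previous statement, let λ and λ' both satisfy δλ = λ̃, and let (E, ζ) and (E', ζ') be defined from λ and λ' respectively. Write λ' − λ = π*μ for the unique μ ∈ A⁰(M, Hom(𝔤, iℝ)). Then E' − E = d(μ/2πi) and ζ'(g) − ζ(g) = g*(μ/2πi) − Ad_g(μ/2πi) for all g ∈ G; hence (E', ζ') − (E, ζ) ∈ ℬ and the class [E, ζ] ∈ 𝒵/ℬ is independent of the choice of λ. -/
/-!
STATEMENT 8. If λ and λ' both satisfy δλ = λ̃, write λ' − λ = π*μ for the unique
μ ∈ A⁰(M, Hom(𝔤, iℝ)); then the corresponding pairs satisfy E' − E = d(μ/2πi) and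
ζ'(g) − ζ(g) = g*(μ/2πi) − Ad_g(μ/2πi): hence (E', ζ') − (E, ζ) ∈ ℬ, and the class
[E, ζ] ∈ 𝒵/ℬ is independent of the choice of λ.

Encoding: as in Statement 7, forms on M, Y and W = Y^[2] are abstract ℂ-modules with
differentials, injective pullback π*, projections p₁*, p₂*, contractions ι and
contravariant G-actions; Hom(𝔤, iℝ)-valued objects are componentwise in X ∈ 𝔤;
E, ζ, E', ζ' are determined by their defining equations from λ, λ' and the curving f.
-/

theorem stmt8
    {G : Type*} [Group G]
    {𝔤 : Type*} [LieRing 𝔤] [LieAlgebra ℝ 𝔤]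
    (Ad : G → 𝔤 → 𝔤)
    {M0 M1 Y0 Y1 Y2 W0 : Type*}
    [AddCommGroup M0] [Module ℂ M0] [AddCommGroup M1] [Module ℂ M1]
    [AddCommGroup Y0] [Module ℂ Y0] [AddCommGroup Y1] [Module ℂ Y1]
    [AddCommGroup Y2] [Module ℂ Y2] [AddCommGroup W0] [Module ℂ W0]
    (dM0 : M0 →ₗ[ℂ] M1) (dY0 : Y0 →ₗ[ℂ] Y1)
    (πs0 : M0 →ₗ[ℂ] Y0) (πs1 : M1 →ₗ[ℂ] Y1)
    (hπinj0 : Function.Injective πs0) (hπinj1 : Function.Injective πs1)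
    (hπd0 : ∀ ω, πs1 (dM0 ω) = dY0 (πs0 ω))
    (p10 p20 : Y0 →ₗ[ℂ] W0)
    (ιY2 : 𝔤 → Y2 →ₗ[ℂ] Y1)
    (aM0 : G → M0 →ₗ[ℂ] M0) (aY0 : G → Y0 →ₗ[ℂ] Y0)
    (haπ0 : ∀ (g : G) (ω : M0), aY0 g (πs0 ω) = πs0 (aM0 g ω))
    -- the two choices λ, λ' with δλ = δλ' = λ̃, and the curving f
    (lam lam' : 𝔤 → Y0) (lamT : 𝔤 → W0) (f : Y2)
    (hdlam : ∀ X, p10 (lam X) - p20 (lam X) = lamT X)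
    (hdlam' : ∀ X, p10 (lam' X) - p20 (lam' X) = lamT X)
    -- the unique μ with π*μ = λ' − λ
    (μ : 𝔤 → M0) (hμ : ∀ X, πs0 (μ X) = lam' X - lam X)
    -- the two associated pairs (E, ζ) and (E', ζ')
    (E E' : 𝔤 → M1) (ζ ζ' : G → 𝔤 → M0)
    (defE : ∀ X : 𝔤,
      (2 * (Real.pi : ℂ) * Complex.I) • πs1 (E X) = dY0 (lam X) + ιY2 X f)
    (defE' : ∀ X : 𝔤,
      (2 * (Real.pi : ℂ) * Complex.I) • πs1 (E' X) = dY0 (lam' X) + ιY2 X f)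
    (defζ : ∀ (g : G) (X : 𝔤),
      (2 * (Real.pi : ℂ) * Complex.I) • πs0 (ζ g X) = aY0 g (lam X) - lam (Ad g⁻¹ X))
    (defζ' : ∀ (g : G) (X : 𝔤),
      (2 * (Real.pi : ℂ) * Complex.I) • πs0 (ζ' g X)
        = aY0 g (lam' X) - lam' (Ad g⁻¹ X)) :
    -- uniqueness of μ
    (∀ μ₂ : 𝔤 → M0, (∀ X, πs0 (μ₂ X) = lam' X - lam X) → μ₂ = μ) ∧
    -- E' − E = d(μ/2πi)
    (∀ X : 𝔤, E' X - E X = dM0 ((2 * (Real.pi : ℂ) * Complex.I)⁻¹ • μ X)) ∧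
    -- ζ'(g) − ζ(g) = g*(μ/2πi) − Ad_g(μ/2πi)
    (∀ (g : G) (X : 𝔤), ζ' g X - ζ g X
      = aM0 g ((2 * (Real.pi : ℂ) * Complex.I)⁻¹ • μ X)
        - (2 * (Real.pi : ℂ) * Complex.I)⁻¹ • μ (Ad g⁻¹ X)) ∧
    -- hence (E', ζ') − (E, ζ) ∈ ℬ
    (∃ ν : 𝔤 → M0, (∀ X, E' X - E X = dM0 (ν X)) ∧
      ∀ (g : G) (X : 𝔤), ζ' g X - ζ g X = aM0 g (ν X) - ν (Ad g⁻¹ X)) := by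

  have hc : (2 * (Real.pi : ℂ) * Complex.I) ≠ 0 := by
    simp [Real.pi_ne_zero, Complex.I_ne_zero, Complex.ofReal_ne_zero]
  have hE : ∀ X : 𝔤, E' X - E X = dM0 ((2 * (Real.pi : ℂ) * Complex.I)⁻¹ • μ X) := by
    intro X
    apply hπinj1
    have h1 : (2 * (Real.pi : ℂ) * Complex.I) • πs1 (E' X - E X) = πs1 (dM0 (μ X)) := by
      rw [map_sub, smul_sub, defE, defE', hπd0, hμ, map_sub]
      abel
    have h2 : πs1 (E' X - E X)
        = πs1 (dM0 ((2 * (Real.pi : ℂ) * Complex.I)⁻¹ • μ X)) := by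
      rw [map_smul, map_smul, ← h1, inv_smul_smul₀ hc]
    exact h2
  have hζ : ∀ (g : G) (X : 𝔤), ζ' g X - ζ g X
      = aM0 g ((2 * (Real.pi : ℂ) * Complex.I)⁻¹ • μ X)
        - (2 * (Real.pi : ℂ) * Complex.I)⁻¹ • μ (Ad g⁻¹ X) := by
    intro g X
    have h1 : (2 * (Real.pi : ℂ) * Complex.I) • πs0 (ζ' g X - ζ g X)
        = πs0 (aM0 g (μ X) - μ (Ad g⁻¹ X)) := by
      rw [map_sub, smul_sub, defζ, defζ', map_sub, ← haπ0, hμ, hμ, map_sub]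
      abel
    have h2 : ζ' g X - ζ g X
        = (2 * (Real.pi : ℂ) * Complex.I)⁻¹ • (aM0 g (μ X) - μ (Ad g⁻¹ X)) :=
      hπinj0 (by rw [map_smul, ← h1, inv_smul_smul₀ hc])
    rw [h2, smul_sub, map_smul]
  refine ⟨?_, hE, hζ, ⟨fun X => (2 * (Real.pi : ℂ) * Complex.I)⁻¹ • μ X, hE, ?_⟩⟩
  · intro μ₂ hμ₂
    funext X
    exact hπinj0 ((hμ₂ X).trans (hμ X).symm)
  · intro g X
    exact hζ g X
end

section
/- Let ((R, v), η) be a G-equivariant pseudo 𝕋-bundle with connection for a strongly G-equivariant bundle gerbe with connection and curving (𝒢, ∇, f) over M, let ρ : Y → Hom(𝔤, iℝ) be the moment of (R, η), fix λ with δλ = λ̃, and define ω ∈ i·A²(M) and μ : M → Hom(𝔤, iℝ) by π*ω = F(η) − f and π*μ = ρ − λ. Then: (i) dω = −Ω where Ω is the 3-curvature of f; (ii) ⟨X, dμ⟩ + ι_{X*}ω = −2πi⟨X, E⟩ for all X ∈ 𝔤; (iii) ⟨X, g*μ − Ad_g μ⟩ = −2πi⟨X, ζ(g)⟩ for all g ∈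 G, X ∈ 𝔤, where (E, ζ) is defined from λ as usual. -/
/-!
STATEMENT 15. Let ((R, v), η) be a G-equivariant pseudo 𝕋-bundle with connection for a
strongly G-equivariant bundle gerbe with connection and curving (𝒢, ∇, f) over M, ρ the
moment of (R, η), λ a choice with δλ = λ̃, and let ω, μ be defined by π*ω = F(η) − f and
π*μ = ρ − λ.  Then: (i) dω = −Ω; (ii) ⟨X, dμ⟩ + ι_{X*}ω = −2πi⟨X, E⟩;
(iii) ⟨X, g*μ − Ad_g μ⟩ = −2πi⟨X, ζ(g)⟩.

Encoding: forms on M and Y are abstract ℂ-modules with differentials, injective pullback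
π*, contractions ι and contravariant G-actions, componentwise in X ∈ 𝔤 for
Hom(𝔤, iℝ)-valued objects (as in Statement 7).  The pseudo-𝕋-bundle conditions
v*(δη^{⊗−1} ⊗ ∇) = 0 and δv = s force δF(η) = F(∇) = δf and δρ = λ̃ = δλ, so F(η) − f
and ρ − λ descend to M: this is `hω` and `hμ`.  The moment identities of (R, η) are
`hmomρ` (dρ(X) + ι_{X*}F(η) = 0) and `hmomρa` (g*ρ = Ad_g ρ); `hBianchi` is dF(η) = 0;
`hΩ` is π*Ω = df; E, ζ have their defining equations from λ and f.
-/

theorem stmt15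
    {G : Type*} [Group G]
    {𝔤 : Type*} [LieRing 𝔤] [LieAlgebra ℝ 𝔤]
    (Ad : G → 𝔤 → 𝔤)
    {M0 M1 M2 M3 Y0 Y1 Y2 Y3 : Type*}
    [AddCommGroup M0] [Module ℂ M0] [AddCommGroup M1] [Module ℂ M1]
    [AddCommGroup M2] [Module ℂ M2] [AddCommGroup M3] [Module ℂ M3]
    [AddCommGroup Y0] [Module ℂ Y0] [AddCommGroup Y1] [Module ℂ Y1]
    [AddCommGroup Y2] [Module ℂ Y2] [AddCommGroup Y3] [Module ℂ Y3]
    (dM0 : M0 →ₗ[ℂ] M1) (dM2 : M2 →ₗ[ℂ] M3)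
    (dY0 : Y0 →ₗ[ℂ] Y1) (dY2 : Y2 →ₗ[ℂ] Y3)
    (πs0 : M0 →ₗ[ℂ] Y0) (πs1 : M1 →ₗ[ℂ] Y1) (πs2 : M2 →ₗ[ℂ] Y2) (πs3 : M3 →ₗ[ℂ] Y3)
    (hπinj0 : Function.Injective πs0) (hπinj1 : Function.Injective πs1)
    (hπinj3 : Function.Injective πs3)
    (hπd0 : ∀ ω, πs1 (dM0 ω) = dY0 (πs0 ω)) (hπd2 : ∀ ω, πs3 (dM2 ω) = dY2 (πs2 ω))
    (ιM2 : 𝔤 → M2 →ₗ[ℂ] M1) (ιM3 : 𝔤 → M3 →ₗ[ℂ] M2)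
    (ιY2 : 𝔤 → Y2 →ₗ[ℂ] Y1)
    (hπι2 : ∀ X ω, ιY2 X (πs2 ω) = πs1 (ιM2 X ω))
    (aM0 : G → M0 →ₗ[ℂ] M0) (aY0 : G → Y0 →ₗ[ℂ] Y0)
    (haπ0 : ∀ (g : G) (ω : M0), aY0 g (πs0 ω) = πs0 (aM0 g ω))
    -- gerbe data: curving f with 3-curvature Ω, λ, and E, ζ
    (f : Y2) (Ωc : M3) (hΩ : πs3 Ωc = dY2 f)
    (lam : 𝔤 → Y0)
    (E : 𝔤 → M1) (ζ : G → 𝔤 → M0)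
    (defE : ∀ X : 𝔤,
      (2 * (Real.pi : ℂ) * Complex.I) • πs1 (E X) = dY0 (lam X) + ιY2 X f)
    (defζ : ∀ (g : G) (X : 𝔤),
      (2 * (Real.pi : ℂ) * Complex.I) • πs0 (ζ g X) = aY0 g (lam X) - lam (Ad g⁻¹ X))
    -- pseudo 𝕋-bundle data: curvature F(η) and moment ρ of (R, η)
    (Fη : Y2) (ρ : 𝔤 → Y0)
    (hBianchi : dY2 Fη = 0)
    (hmomρ : ∀ X : 𝔤, dY0 (ρ X) + ιY2 X Fη = 0)
    (hmomρa : ∀ (g : G) (X : 𝔤), aY0 g (ρ X) = ρ (Ad g⁻¹ X))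
    -- the 2-form ω and function μ on M: π*ω = F(η) − f, π*μ = ρ − λ
    (ω : M2) (hω : πs2 ω = Fη - f)
    (μ : 𝔤 → M0) (hμ : ∀ X, πs0 (μ X) = ρ X - lam X) :
    -- (i) dω = −Ω
    (dM2 ω = -Ωc) ∧
    -- (ii) ⟨X, dμ⟩ + ι_{X*}ω = −2πi⟨X, E⟩
    (∀ X : 𝔤, dM0 (μ X) + ιM2 X ω = -((2 * (Real.pi : ℂ) * Complex.I)) • E X) ∧
    -- (iii) ⟨X, g*μ − Ad_g μ⟩ = −2πi⟨X, ζ(g)⟩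
    (∀ (g : G) (X : 𝔤),
      aM0 g (μ X) - μ (Ad g⁻¹ X) = -((2 * (Real.pi : ℂ) * Complex.I)) • ζ g X) := by
  refine ⟨?_, ?_, ?_⟩
  · apply hπinj3
    rw [hπd2, hω, map_sub, hBianchi, map_neg, hΩ]
    abel
  · intro X
    apply hπinj1
    rw [map_add, hπd0, hμ, ← hπι2, hω, map_sub, map_sub, map_smul]
    linear_combination (norm := module) hmomρ X + defE X
  · intro g X
    apply hπinj0
    rw [map_sub, ← haπ0, hμ, hμ, map_sub, hmomρa, map_smul]
    linear_combination (norm := module) defζ g X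
end
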